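/- arXiv:1811.07063 — 2 statements merged into one kernel-verified Lean document; each statement's English description precedes it below -/
import Mathlib

section
/- If φ is irrational, then for every θ, the set of points of Λ_{n,c} lying on the supporting line at angle θ (i.e., maximizing v_θ over Λ_{n,c}) has cardinality 1 or 2. -/
/-! The real part `v θ` is linear, so on `limitSet n c` it is the sum over `k` of
`r ^ k * cos (2π (k φ - θ + j_k / n))`, and each digit `j_k` can be chosen independently: the
maximizers are exactly the points all of whose digits maximize their own term. Two digits
`a ≠ b` tie at level `k` only if `2 (k φ - θ) + (a + b) / n` is an integer; this allows at most two
tying digits at each level, and by irrationality of `φ` it happens at no more than one level.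
The maximizers then correspond to the one or two digits maximizing at that level. -/

noncomputable def xi (n : ℕ) : ℂ := Complex.exp (2 * Real.pi * Complex.I / n)

noncomputable def limitSet (n : ℕ) (c : ℂ) : Set ℂ :=
  Set.range (fun j : ℕ → Fin n => ∑' k : ℕ, c ^ k * xi n ^ ((j k : ℕ)))

noncomputable def v (θ : ℝ) (z : ℂ) : ℝ :=
  (z * Complex.exp (-(2 * Real.pi * Complex.I) * θ)).re

open Set Function

theorem isMaxOn_univ_tsum_iff {ι α : Type*} [DecidableEq ι] {g : ι → α → ℝ}
    (hg : ∀ j : ι → α, Summable fun k => g k (j k)) (j : ι → α) :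
    IsMaxOn (fun j' : ι → α => ∑' k, g k (j' k)) univ j ↔ ∀ k, IsMaxOn (g k) univ (j k) := by
  refine ⟨fun hj k a _ => ?_, fun hj j' _ => (hg j').tsum_le_tsum (fun k => hj k trivial) (hg j)⟩
  by_contra hlt
  replace hlt : g k (j k) < g k a := lt_of_not_ge hlt
  have hle : (fun i => g i (j i)) ≤ fun i => g i (update j k a i) := by
    intro i
    rcases eq_or_ne i k with rfl | hi
    · simpa using hlt.le
    · simp [hi]
  have := (hg j).tsum_lt_tsum (i := k) hle (by simpa using hlt) (hg _)
  exact (hj (mem_univ (update j k a))).not_gt this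

theorem Set.univ_pi_eq_image_update {ι α : Type*} [DecidableEq ι] {A : ι → Set α} {j : ι → α}
    (hj : j ∈ univ.pi A) {k₀ : ι} (hA : ∀ k ≠ k₀, (A k).Subsingleton) :
    univ.pi A = update j k₀ '' A k₀ := by
  ext j'
  constructor
  · intro hj'
    refine ⟨j' k₀, hj' k₀ trivial, funext fun k => ?_⟩
    rcases eq_or_ne k k₀ with rfl | hk
    · simp
    · simpa [hk] using hA k hk (hj k trivial) (hj' k trivial)
  · rintro ⟨a, ha, rfl⟩ k -
    rcases eq_or_ne k k₀ with rfl | hk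
    · simpa using ha
    · simpa [hk] using hj k trivial

theorem Fin.eq_of_natCast_sub_eq_intCast_mul {n : ℕ} {a b : Fin n} {m : ℤ}
    (h : ((a : ℕ) : ℝ) - (b : ℕ) = m * n) : a = b := by
  have hdvd : (n : ℤ) ∣ (a : ℕ) - (b : ℕ) := ⟨m, by exact_mod_cast h.trans (mul_comm _ _)⟩
  exact Fin.ext ((Nat.modEq_iff_dvd.2 (dvd_sub_comm.1 hdvd)).eq_of_lt_of_lt a.2 b.2)

section CosineTies

variable {n : ℕ} {x : ℝ}

theorem exists_intCast_of_cos_eq {a b : Fin n} (hab : a ≠ b)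
    (h : Real.cos (2 * Real.pi * (x + (a : ℕ) / n)) = Real.cos (2 * Real.pi * (x + (b : ℕ) / n))) :
    ∃ m : ℤ, 2 * x + ((a : ℕ) + (b : ℕ)) / n = m := by
  have hn : (n : ℝ) ≠ 0 := by
    have := a.pos
    positivity
  obtain ⟨m, hm | hm⟩ := Real.cos_eq_cos_iff.1 h
  · refine absurd (Fin.eq_of_natCast_sub_eq_intCast_mul (m := -m) ?_) hab
    field_simp at hm
    push_cast
    linear_combination -hm
  · refine ⟨m, ?_⟩
    field_simp at hm ⊢
    linear_combination hm

theorem mem_range_ratCast_of_cos_eq {a b : Fin n} (hab : a ≠ b)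
    (h : Real.cos (2 * Real.pi * (x + (a : ℕ) / n)) = Real.cos (2 * Real.pi * (x + (b : ℕ) / n))) :
    x ∈ range ((↑) : ℚ → ℝ) := by
  obtain ⟨m, hm⟩ := exists_intCast_of_cos_eq hab h
  exact ⟨(m - ((a : ℕ) + (b : ℕ)) / n) / 2, by push_cast; linarith⟩

theorem ncard_le_two_of_cos_eq {S : Set (Fin n)}
    (hS : ∀ a ∈ S, ∀ b ∈ S,
      Real.cos (2 * Real.pi * (x + (a : ℕ) / n)) = Real.cos (2 * Real.pi * (x + (b : ℕ) / n))) :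
    S.ncard ≤ 2 := by
  by_contra! h
  obtain ⟨a, ha, b, hb, d, hd, hab, hac, hbd⟩ := (Set.two_lt_ncard (toFinite S)).1 h
  obtain ⟨m₁, hm₁⟩ := exists_intCast_of_cos_eq hab (hS a ha b hb)
  obtain ⟨m₂, hm₂⟩ := exists_intCast_of_cos_eq hac (hS a ha d hd)
  refine hbd (Fin.eq_of_natCast_sub_eq_intCast_mul (m := m₁ - m₂) ?_)
  have hn : (n : ℝ) ≠ 0 := by
    have := a.pos
    positivity
  field_simp at hm₁ hm₂
  push_cast
  linear_combination hm₁ - hm₂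

end CosineTies

theorem Irrational.eq_of_natCast_mul_sub_mem_range {φ θ : ℝ} (hφ : Irrational φ) {k₁ k₂ : ℕ}
    (h₁ : k₁ * φ - θ ∈ range ((↑) : ℚ → ℝ)) (h₂ : k₂ * φ - θ ∈ range ((↑) : ℚ → ℝ)) :
    k₁ = k₂ := by
  by_contra hk
  obtain ⟨q₁, hq₁⟩ := h₁
  obtain ⟨q₂, hq₂⟩ := h₂
  refine hφ.intCast_mul (m := k₁ - k₂) (by omega) ⟨q₁ - q₂, ?_⟩
  push_cast
  linarith

theorem v_tsum (θ : ℝ) {f : ℕ → ℂ} (hf : Summable f) : v θ (∑' k, f k) = ∑' k, v θ (f k) := by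
  rw [v, ← tsum_mul_right, Complex.re_tsum (hf.mul_right _)]
  rfl

theorem summable_v (θ : ℝ) {f : ℕ → ℂ} (hf : Summable f) : Summable fun k => v θ (f k) :=
  (hf.mul_right _).mapL Complex.reCLM

theorem v_ofReal_mul_exp (θ ρ t : ℝ) :
    v θ (ρ * Complex.exp (2 * Real.pi * Complex.I * t)) = ρ * Real.cos (2 * Real.pi * (t - θ)) := by
  rw [v, mul_assoc, ← Complex.exp_add, Complex.re_ofReal_mul, ← Complex.exp_ofReal_mul_I_re]
  congr 3
  push_cast
  ring

theorem norm_xi (n : ℕ) : ‖xi n‖ = 1 := by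
  rw [xi, Complex.norm_exp]
  simp [Complex.div_re]

theorem xi_pow (n a : ℕ) : xi n ^ a = Complex.exp (2 * Real.pi * Complex.I * (a / n : ℝ)) := by
  rw [xi, ← Complex.exp_nat_mul]
  push_cast
  ring_nf

noncomputable def limitPoint (n : ℕ) (c : ℂ) (j : ℕ → Fin n) : ℂ :=
  ∑' k, c ^ k * xi n ^ (j k : ℕ)

section LimitPoints

variable {n : ℕ} {c : ℂ}

theorem limitSet_eq_range : limitSet n c = range (limitPoint n c) := rfl

theorem summable_pow_mul_xi_pow (hc : ‖c‖ < 1) (j : ℕ → Fin n) :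
    Summable fun k => c ^ k * xi n ^ (j k : ℕ) :=
  .of_norm_bounded (summable_geometric_of_lt_one (norm_nonneg c) hc) fun k => by
    simp [norm_xi]

theorem limitPoint_update (hc : ‖c‖ < 1) (j : ℕ → Fin n) (k : ℕ) (a : Fin n) :
    limitPoint n c (update j k a) =
      c ^ k * xi n ^ (a : ℕ) - c ^ k * xi n ^ (j k : ℕ) + limitPoint n c j := by
  have hupd : (fun i => c ^ i * xi n ^ (update j k a i : ℕ)) =
      update (fun i => c ^ i * xi n ^ (j i : ℕ)) k (c ^ k * xi n ^ (a : ℕ)) := by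
    ext i
    rcases eq_or_ne i k with rfl | hi
    · simp
    · simp [hi]
  rw [limitPoint, hupd]
  exact ((summable_pow_mul_xi_pow hc j).hasSum.update k _).tsum_eq

theorem limitPoint_update_injective (hn : n ≠ 0) (hc0 : c ≠ 0) (hc : ‖c‖ < 1)
    (j : ℕ → Fin n) (k : ℕ) : Injective fun a => limitPoint n c (update j k a) := by
  intro a b hab
  simp only [limitPoint_update hc, add_left_inj, sub_left_inj] at hab
  exact Fin.ext <| (Complex.isPrimitiveRoot_exp n hn).pow_inj a.2 b.2
    (mul_left_cancel₀ (pow_ne_zero k hc0) hab)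

def maxDigits (n : ℕ) (c : ℂ) (θ : ℝ) (k : ℕ) : Set (Fin n) :=
  {a | IsMaxOn (fun b : Fin n => v θ (c ^ k * xi n ^ (b : ℕ))) univ a}

theorem maxDigits_nonempty (hn : n ≠ 0) (θ : ℝ) (k : ℕ) : (maxDigits n c θ k).Nonempty :=
  have : NeZero n := ⟨hn⟩
  (Finite.exists_max fun b : Fin n => v θ (c ^ k * xi n ^ (b : ℕ))).imp fun _ ha b _ => ha b

theorem maximizers_eq_image_univ_pi (hc : ‖c‖ < 1) (θ : ℝ) :
    {p ∈ limitSet n c | ∀ w ∈ limitSet n c, v θ w ≤ v θ p} =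
      limitPoint n c '' univ.pi (maxDigits n c θ) := by
  have hv : ∀ j, v θ (limitPoint n c j) = ∑' k, v θ (c ^ k * xi n ^ (j k : ℕ)) := fun j =>
    v_tsum θ (summable_pow_mul_xi_pow hc j)
  have hmax : ∀ j, IsMaxOn (v θ ∘ limitPoint n c) univ j ↔ j ∈ univ.pi (maxDigits n c θ) := by
    intro j
    rw [show v θ ∘ limitPoint n c = _ from funext hv,
      isMaxOn_univ_tsum_iff (g := fun k (b : Fin n) => v θ (c ^ k * xi n ^ (b : ℕ)))
        (fun j' => summable_v θ (summable_pow_mul_xi_pow hc j')), mem_univ_pi]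
    rfl
  ext p
  simp only [limitSet_eq_range, mem_ofPred_eq, forall_mem_range, mem_image]
  constructor
  · rintro ⟨⟨j, rfl⟩, hj⟩
    exact ⟨j, (hmax j).1 (isMaxOn_univ_iff.2 hj), rfl⟩
  · rintro ⟨j, hj, rfl⟩
    exact ⟨mem_range_self j, isMaxOn_univ_iff.1 ((hmax j).2 hj)⟩

end LimitPoints

section Rotation

variable {n : ℕ} {r φ : ℝ} {c : ℂ}

theorem v_pow_mul_xi_pow (hc : c = r * Complex.exp (2 * Real.pi * Complex.I * φ))
    (θ : ℝ) (k : ℕ) (a : Fin n) :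
    v θ (c ^ k * xi n ^ (a : ℕ)) = r ^ k * Real.cos (2 * Real.pi * ((k * φ - θ) + (a : ℕ) / n)) := by
  have hexp : c ^ k * xi n ^ (a : ℕ) =
      (r ^ k : ℝ) * Complex.exp (2 * Real.pi * Complex.I * (k * φ + (a : ℕ) / n : ℝ)) := by
    rw [hc, xi_pow, mul_pow, ← Complex.exp_nat_mul, mul_assoc, ← Complex.exp_add]
    push_cast
    ring_nf
  rw [hexp, v_ofReal_mul_exp]
  ring_nf

theorem cos_eq_of_mem_maxDigits (hr : 0 < r)
    (hc : c = r * Complex.exp (2 * Real.pi * Complex.I * φ)) {θ : ℝ} {k : ℕ} {a b : Fin n}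
    (ha : a ∈ maxDigits n c θ k) (hb : b ∈ maxDigits n c θ k) :
    Real.cos (2 * Real.pi * ((k * φ - θ) + (a : ℕ) / n)) =
      Real.cos (2 * Real.pi * ((k * φ - θ) + (b : ℕ) / n)) := by
  have hv := le_antisymm (isMaxOn_univ_iff.1 hb a) (isMaxOn_univ_iff.1 ha b)
  simp only [v_pow_mul_xi_pow hc] at hv
  exact mul_left_cancel₀ (pow_pos hr k).ne' hv

theorem ncard_maxDigits_le_two (hr : 0 < r)
    (hc : c = r * Complex.exp (2 * Real.pi * Complex.I * φ)) (θ : ℝ) (k : ℕ) :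
    (maxDigits n c θ k).ncard ≤ 2 :=
  ncard_le_two_of_cos_eq fun _ ha _ hb => cos_eq_of_mem_maxDigits hr hc ha hb

theorem exists_forall_ne_maxDigits_subsingleton (hr : 0 < r) (hφ : Irrational φ)
    (hc : c = r * Complex.exp (2 * Real.pi * Complex.I * φ)) (θ : ℝ) :
    ∃ k₀, ∀ k ≠ k₀, (maxDigits n c θ k).Subsingleton := by
  have hrat : ∀ k, ¬(maxDigits n c θ k).Subsingleton → k * φ - θ ∈ range ((↑) : ℚ → ℝ) := by
    intro k hk
    obtain ⟨a, ha, b, hb, hab⟩ := not_subsingleton_iff.1 hk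
    exact mem_range_ratCast_of_cos_eq hab (cos_eq_of_mem_maxDigits hr hc ha hb)
  by_cases h : ∃ k₀, ¬(maxDigits n c θ k₀).Subsingleton
  · obtain ⟨k₀, hk₀⟩ := h
    exact ⟨k₀, fun k hk => by_contra fun hk' => hk (hφ.eq_of_natCast_mul_sub_mem_range
      (hrat k hk') (hrat k₀ hk₀))⟩
  · push Not at h
    exact ⟨0, fun k _ => h k⟩

end Rotation

theorem irrational_extreme_card (n : ℕ) (hn : 2 ≤ n) (r φ : ℝ) (hr0 : 0 < r) (hr1 : r < 1)
    (hφ : Irrational φ) (c : ℂ) (hc : c = r * Complex.exp (2 * Real.pi * Complex.I * φ))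
    (θ : ℝ) :
    ({p ∈ limitSet n c | ∀ w ∈ limitSet n c, v θ w ≤ v θ p}).ncard = 1 ∨
    ({p ∈ limitSet n c | ∀ w ∈ limitSet n c, v θ w ≤ v θ p}).ncard = 2 := by
  have hn0 : n ≠ 0 := by omega
  have hnorm : ‖c‖ = r := by
    simp [hc, Complex.norm_exp, abs_of_pos hr0]
  have hc0 : c ≠ 0 := norm_pos_iff.1 (hnorm ▸ hr0)
  have hc1 : ‖c‖ < 1 := hnorm ▸ hr1
  obtain ⟨k₀, hk₀⟩ := exists_forall_ne_maxDigits_subsingleton hr0 hφ hc θ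
  obtain ⟨j, hj⟩ : (univ.pi (maxDigits n c θ)).Nonempty :=
    univ_pi_nonempty_iff.2 (maxDigits_nonempty hn0 θ)
  rw [maximizers_eq_image_univ_pi hc1, Set.univ_pi_eq_image_update hj hk₀, image_image,
    ncard_image_of_injective _ (limitPoint_update_injective hn0 hc0 hc1 j k₀)]
  have hpos : 0 < (maxDigits n c θ k₀).ncard := (maxDigits_nonempty hn0 θ k₀).ncard_pos
  have hle := ncard_maxDigits_le_two (n := n) hr0 hc θ k₀
  omega
end

section
/- Suppose c = r e^{2πi p/q} with p/q in lowest terms and gcd(n,q) = 1, 0 < r < 1. For θ not in the finite set Θ = {ℓ(p/q) + m/n + 1/(2n) mod 1 : 0 ≤ ℓ < q, 0 ≤ m < n}, there is exactly one point of Λ_{n,c} maximizing v_θ. -/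
/-!
Write `a = p / q`. Since `v φ (c * z + b) = r * v (φ - a) z + v φ b`, every maximizer of `v θ`
on `Λ` is `c * w + ξ ^ j` with `w` a maximizer of `v (θ - a)` and `j` a maximizer of
`j ↦ cos (2π (j / n - θ))`. That digit `j` is unique unless `θ` is a midpoint `m / n + 1 / (2n)`
mod 1, and for `θ ∉ Θ` no angle `θ - k a` is one. So the maximizer set for `θ - k a` lies in a
single copy, scaled by `r`, of the maximizer set for `θ - (k + 1) a`; its diameter is at most
`r ^ k * diam Λ`, hence zero.
-/

open Set Metric Real Filter

def maximizers {α : Type*} (f : α → ℝ) (s : Set α) : Set α := {z | z ∈ s ∧ ∀ w ∈ s, f w ≤ f z}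

lemma maximizers_nonempty {α : Type*} [TopologicalSpace α] {f : α → ℝ} {s : Set α}
    (hs : IsCompact s) (hne : s.Nonempty) (hf : ContinuousOn f s) : (maximizers f s).Nonempty :=
  let ⟨z, hz, hmax⟩ := hs.exists_isMaxOn hne hf
  ⟨z, hz, fun _ hw => hmax hw⟩

lemma eq_zero_of_le_mul_succ {d : ℕ → ℝ} {r D : ℝ} (hd : ∀ k, 0 ≤ d k) (hD : ∀ k, d k ≤ D)
    (hr0 : 0 ≤ r) (hr1 : r < 1) (h : ∀ k, d k ≤ r * d (k + 1)) : d 0 = 0 := by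
  have hpow : ∀ k, d 0 ≤ r ^ k * d k := by
    intro k
    induction k with
    | zero => simp
    | succ k ih =>
      calc d 0 ≤ r ^ k * d k := ih
        _ ≤ r ^ k * (r * d (k + 1)) := mul_le_mul_of_nonneg_left (h k) (pow_nonneg hr0 k)
        _ = r ^ (k + 1) * d (k + 1) := by ring
  have hlim : Tendsto (fun k => r ^ k * D) atTop (nhds 0) := by
    simpa using (tendsto_pow_atTop_nhds_zero_of_lt_one hr0 hr1).mul_const D
  refine le_antisymm (ge_of_tendsto hlim (Eventually.of_forall fun k => ?_)) (hd 0)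
  exact (hpow k).trans (mul_le_mul_of_nonneg_left (hD k) (pow_nonneg hr0 k))

lemma v_continuous (φ : ℝ) : Continuous (v φ) :=
  Complex.continuous_re.comp (continuous_id.mul continuous_const)

lemma v_affine (r a φ : ℝ) (z b : ℂ) :
    v φ (r * Complex.exp (2 * π * Complex.I * a) * z + b) = r * v (φ - a) z + v φ b := by
  have hexp : Complex.exp (2 * π * Complex.I * a) * Complex.exp (-(2 * π * Complex.I) * φ) =
      Complex.exp (-(2 * π * Complex.I) * ((φ - a : ℝ) : ℂ)) := by
    rw [← Complex.exp_add]; push_cast; ring_nf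
  unfold v
  rw [add_mul, Complex.add_re, ← Complex.re_ofReal_mul, ← hexp]
  ring_nf

lemma v_xi_pow (n j : ℕ) (φ : ℝ) : v φ (xi n ^ j) = cos (2 * π * (j / n - φ)) := by
  rw [v, xi, ← Complex.exp_nat_mul, ← Complex.exp_add, ← Complex.exp_ofReal_mul_I_re]
  push_cast
  ring_nf

section IFS

variable {ι : Type*} {Λ : Set ℂ} {b : ι → ℂ} {r a : ℝ} {c : ℂ}

lemma maximizers_v_subset_iUnion_image (hr : 0 < r)
    (hc : c = r * Complex.exp (2 * π * Complex.I * a)) (hcomp : IsCompact Λ) (hne : Λ.Nonempty)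
    (hinv : Λ = ⋃ i, (fun z => c * z + b i) '' Λ) (φ : ℝ) :
    maximizers (v φ) Λ ⊆ ⋃ i ∈ maximizers (fun i => v φ (b i)) univ,
      (fun z => c * z + b i) '' maximizers (v (φ - a)) Λ := by
  rintro z ⟨hzΛ, hzmax⟩
  obtain ⟨w₀, hw₀Λ, hw₀max⟩ :=
    maximizers_nonempty hcomp hne (v_continuous (φ - a)).continuousOn
  have hmaps : ∀ i, ∀ w ∈ Λ, c * w + b i ∈ Λ := fun i w hw => by
    rw [hinv]; exact mem_iUnion.2 ⟨i, w, hw, rfl⟩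
  rw [hinv] at hzΛ
  obtain ⟨i, w, hwΛ, rfl⟩ := mem_iUnion.1 hzΛ
  have hcompare : ∀ i', r * v (φ - a) w₀ + v φ (b i') ≤ r * v (φ - a) w + v φ (b i) := by
    intro i'
    simpa only [hc, v_affine] using hzmax _ (hmaps i' w₀ hw₀Λ)
  have hww₀ : r * v (φ - a) w ≤ r * v (φ - a) w₀ :=
    mul_le_mul_of_nonneg_left (hw₀max w hwΛ) hr.le
  have hw₀w : v (φ - a) w₀ ≤ v (φ - a) w :=
    le_of_mul_le_mul_left (by linarith [hcompare i]) hr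
  refine mem_biUnion (x := i) ⟨mem_univ _, fun i' _ => ?_⟩ ⟨w, ⟨hwΛ, ?_⟩, rfl⟩
  · linarith [hcompare i']
  · exact fun u hu => (hw₀max u hu).trans hw₀w

lemma diam_maximizers_v_le (hr : 0 < r) (hc : c = r * Complex.exp (2 * π * Complex.I * a))
    (hcomp : IsCompact Λ) (hne : Λ.Nonempty) (hinv : Λ = ⋃ i, (fun z => c * z + b i) '' Λ)
    (φ : ℝ) (huniq : (maximizers (fun i => v φ (b i)) univ).Subsingleton) :
    diam (maximizers (v φ) Λ) ≤ r * diam (maximizers (v (φ - a)) Λ) := by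
  have hsub := maximizers_v_subset_iUnion_image hr hc hcomp hne hinv φ
  have hbdd : Bornology.IsBounded (maximizers (v (φ - a)) Λ) :=
    hcomp.isBounded.subset fun _ hz => hz.1
  have hnorm : ‖c‖ = r := by
    rw [hc, norm_mul, Complex.norm_exp, Complex.norm_real, Real.norm_of_nonneg hr.le]
    simp
  refine diam_le_of_forall_dist_le (by positivity) fun z hz z' hz' => ?_
  obtain ⟨i, hi, w, hw, rfl⟩ := mem_iUnion₂.1 (hsub hz)
  obtain ⟨i', hi', w', hw', rfl⟩ := mem_iUnion₂.1 (hsub hz')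
  obtain rfl := huniq hi hi'
  calc dist (c * w + b i) (c * w' + b i) = r * dist w w' := by
        rw [dist_add_right, dist_eq_norm, ← mul_sub, norm_mul, hnorm, dist_eq_norm]
    _ ≤ r * diam (maximizers (v (φ - a)) Λ) :=
        mul_le_mul_of_nonneg_left (dist_le_diam_of_mem hbdd hw hw') hr.le

theorem maximizers_v_subsingleton (hr0 : 0 < r) (hr1 : r < 1)
    (hc : c = r * Complex.exp (2 * π * Complex.I * a)) (hcomp : IsCompact Λ) (hne : Λ.Nonempty)
    (hinv : Λ = ⋃ i, (fun z => c * z + b i) '' Λ) (θ : ℝ)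
    (huniq : ∀ k : ℕ, (maximizers (fun i => v (θ - k * a) (b i)) univ).Subsingleton) :
    (maximizers (v θ) Λ).Subsingleton := by
  set d : ℕ → ℝ := fun k => diam (maximizers (v (θ - k * a)) Λ) with hd
  have hstep : ∀ k, d k ≤ r * d (k + 1) := fun k => by
    have hshift : θ - k * a - a = θ - (k + 1 : ℕ) * a := by push_cast; ring
    simpa only [hd, hshift] using diam_maximizers_v_le hr0 hc hcomp hne hinv _ (huniq k)
  have hbound : ∀ k, d k ≤ diam Λ := fun k => diam_mono (fun _ hz => hz.1) hcomp.isBounded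
  have hzero : d 0 = 0 := eq_zero_of_le_mul_succ (fun _ => diam_nonneg) hbound hr0.le hr1 hstep
  intro z hz z' hz'
  have hbdd : Bornology.IsBounded (maximizers (v θ) Λ) :=
    hcomp.isBounded.subset fun _ hz => hz.1
  refine dist_le_zero.1 ((dist_le_diam_of_mem hbdd hz hz').trans ?_)
  simpa [hd] using hzero.le

end IFS

lemma cos_two_pi_mul_eq_one_iff (x : ℝ) : cos (2 * π * x) = 1 ↔ (x : UnitAddCircle) = 0 := by
  rw [Real.cos_eq_one_iff, AddCircle.coe_eq_zero_iff]
  refine exists_congr fun k => ?_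
  rw [zsmul_eq_mul, mul_one, mul_comm, mul_right_inj' (by positivity)]

lemma exists_int_of_cos_two_pi_mul_eq {x y : ℝ} (h : cos (2 * π * x) = cos (2 * π * y)) :
    ∃ k : ℤ, y - x = k ∨ y + x = k := by
  obtain ⟨k, hk | hk⟩ := Real.cos_eq_cos_iff.1 h
  · exact ⟨k, Or.inl (by nlinarith [pi_pos])⟩
  · exact ⟨k, Or.inr (by nlinarith [pi_pos])⟩

lemma coe_add_intCast (x : ℝ) (k : ℤ) : ((x + k : ℝ) : UnitAddCircle) = x := by
  rw [AddCircle.coe_add, add_eq_left, AddCircle.coe_eq_zero_iff]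
  exact ⟨k, by simp⟩

lemma eq_of_coe_div_eq {n i j : ℕ} (hi : i < n) (hj : j < n)
    (h : ((i / n : ℝ) : UnitAddCircle) = ((j / n : ℝ) : UnitAddCircle)) : i = j := by
  have : NeZero n := ⟨by omega⟩
  rw [← ZMod.toAddCircle_natCast, ← ZMod.toAddCircle_natCast, ZMod.toAddCircle_inj,
    ZMod.natCast_eq_natCast_iff', Nat.mod_eq_of_lt hi, Nat.mod_eq_of_lt hj] at h
  exact h

lemma exists_lt_coe_div_eq {n : ℕ} (hn : 0 < n) (t : ℤ) :
    ∃ m < n, ((t / n : ℝ) : UnitAddCircle) = ((m / n : ℝ) : UnitAddCircle) := by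
  have : NeZero n := ⟨hn.ne'⟩
  exact ⟨(t : ZMod n).val, ZMod.val_lt _, by
    rw [← ZMod.toAddCircle_intCast, ZMod.toAddCircle_apply]⟩

theorem maximizers_v_xi_pow_subsingleton {n : ℕ} (hn : 0 < n) (φ : ℝ)
    (hφ : ∀ m : ℕ, m < n → (φ : UnitAddCircle) ≠ ((m / n + 1 / (2 * n) : ℝ) : UnitAddCircle)) :
    (maximizers (fun j : Fin n => v φ (xi n ^ (j : ℕ))) univ).Subsingleton := by
  simp only [v_xi_pow]
  have hn' : (0 : ℝ) < n := by exact_mod_cast hn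
  rintro i hi j hj
  obtain ⟨k, hk | hk⟩ :=
    exists_int_of_cos_two_pi_mul_eq (le_antisymm (hj.2 i trivial) (hi.2 j trivial))
  · refine Fin.ext (eq_of_coe_div_eq i.2 j.2 ?_)
    rw [show (j / n : ℝ) = i / n + k by linarith, coe_add_intCast]
  · -- `2nφ` is the integer `i + j - kn`; a midpoint if it is odd, a vertex direction if even
    have h2φ : (2 * n * φ : ℝ) = ((i + j - k * n : ℤ) : ℝ) := by
      push_cast; field_simp at hk; linarith
    obtain ⟨t, ht | ht⟩ := Int.even_or_odd' (i + j - k * n)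
    · have hφt : φ = t / n := by
        rw [ht] at h2φ; push_cast at h2φ; field_simp; linarith
      obtain ⟨m, hm, hmt⟩ := exists_lt_coe_div_eq hn t
      have hvertex : ∀ l ∈ maximizers (fun j : Fin n => cos (2 * π * (j / n - φ))) univ,
          (l : ℕ) = m := by
        intro l hl
        have hm1 : cos (2 * π * (m / n - φ)) = 1 := by
          rw [cos_two_pi_mul_eq_one_iff, AddCircle.coe_sub, hφt, hmt, sub_self]
        have hl1 := le_antisymm (cos_le_one _) (hm1.symm.le.trans (hl.2 ⟨m, hm⟩ trivial))
        rw [cos_two_pi_mul_eq_one_iff, AddCircle.coe_sub, sub_eq_zero, hφt, hmt] at hl1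
        exact eq_of_coe_div_eq l.2 hm hl1
      exact Fin.ext ((hvertex i hi).trans (hvertex j hj).symm)
    · obtain ⟨m, hm, hmt⟩ := exists_lt_coe_div_eq hn t
      refine absurd ?_ (hφ m hm)
      have hφt : φ = t / n + 1 / (2 * n) := by
        rw [ht] at h2φ; push_cast at h2φ; field_simp; linarith
      rw [hφt, AddCircle.coe_add, hmt, ← AddCircle.coe_add]

lemma coe_nat_mul_div_eq_coe_mod_mul (p : ℤ) (q k : ℕ) :
    ((k * (p / q) : ℝ) : UnitAddCircle) = (((k % q : ℕ) : ℝ) * (p / q) : ℝ) := by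
  rcases Nat.eq_zero_or_pos q with rfl | hq
  · simp
  have hk : (k : ℝ) * (p / q) = (k % q : ℕ) * (p / q) + ((k / q : ℕ) * p : ℤ) := by
    have hkq : (k : ℝ) = (k % q : ℕ) + q * (k / q : ℕ) := by
      exact_mod_cast (Nat.mod_add_div k q).symm
    rw [hkq, Int.cast_mul, Int.cast_natCast]
    field_simp
  rw [hk, coe_add_intCast]

lemma coe_sub_nat_mul_ne_midpoint {n q : ℕ} (hq : 0 < q) {p : ℤ} {θ : ℝ}
    (hθ : ∀ ℓ m : ℕ, ℓ < q → m < n →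
      (θ : UnitAddCircle) ≠ ((ℓ * (p / q) + m / n + 1 / (2 * n) : ℝ) : UnitAddCircle))
    (k m : ℕ) (hm : m < n) :
    ((θ - k * (p / q) : ℝ) : UnitAddCircle) ≠ ((m / n + 1 / (2 * n) : ℝ) : UnitAddCircle) := by
  intro h
  apply hθ (k % q) m (Nat.mod_lt _ hq) hm
  rw [← sub_add_cancel θ (k * (p / q)), AddCircle.coe_add, h, coe_nat_mul_div_eq_coe_mod_mul,
    ← AddCircle.coe_add, add_comm, add_assoc]

theorem unique_extreme_off_Theta_general (n : ℕ) (hn : 2 ≤ n) (p : ℤ) (q : ℕ) (hq : 0 < q)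
    (r : ℝ) (hr0 : 0 < r) (hr1 : r < 1)
    (c : ℂ) (hc : c = r * Complex.exp (2 * Real.pi * Complex.I * ((p : ℝ) / q)))
    (Λ : Set ℂ) (hne : Λ.Nonempty) (hcomp : IsCompact Λ)
    (hinv : Λ = ⋃ j : Fin n, (fun z => c * z + xi n ^ (j : ℕ)) '' Λ)
    (θ : ℝ)
    (hθ : ∀ ℓ m : ℕ, ℓ < q → m < n →
      ((θ : ℝ) : AddCircle (1 : ℝ)) ≠
        (((ℓ : ℝ) * ((p : ℝ) / q) + (m : ℝ) / n + 1 / (2 * n) : ℝ) : AddCircle (1 : ℝ))) :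
    ∃! z : ℂ, z ∈ Λ ∧ ∀ w ∈ Λ, v θ w ≤ v θ z := by
  have hc' : c = r * Complex.exp (2 * π * Complex.I * ((p / q : ℝ) : ℂ)) := by
    rw [hc]; push_cast; rfl
  have huniq (k : ℕ) :
      (maximizers (fun j : Fin n => v (θ - k * (p / q)) (xi n ^ (j : ℕ))) univ).Subsingleton :=
    maximizers_v_xi_pow_subsingleton (by omega) _ (coe_sub_nat_mul_ne_midpoint hq hθ k)
  obtain ⟨z, hz⟩ := maximizers_nonempty hcomp hne (v_continuous θ).continuousOn
  exact ⟨z, hz, fun w hw => maximizers_v_subsingleton hr0 hr1 hc' hcomp hne hinv θ huniq hw hz⟩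

theorem unique_extreme_off_Theta (n : ℕ) (hn : 2 ≤ n) (p : ℤ) (q : ℕ) (hq : 0 < q)
    (hpq : Int.gcd p q = 1) (hnq : Nat.gcd n q = 1) (r : ℝ) (hr0 : 0 < r) (hr1 : r < 1)
    (c : ℂ) (hc : c = r * Complex.exp (2 * Real.pi * Complex.I * ((p : ℝ) / q)))
    (Λ : Set ℂ) (hne : Λ.Nonempty) (hcomp : IsCompact Λ)
    (hinv : Λ = ⋃ j : Fin n, (fun z => c * z + xi n ^ (j : ℕ)) '' Λ)
    (θ : ℝ)
    (hθ : ∀ ℓ m : ℕ, ℓ < q → m < n →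
      ((θ : ℝ) : AddCircle (1 : ℝ)) ≠
        (((ℓ : ℝ) * ((p : ℝ) / q) + (m : ℝ) / n + 1 / (2 * n) : ℝ) : AddCircle (1 : ℝ))) :
    ∃! z : ℂ, z ∈ Λ ∧ ∀ w ∈ Λ, v θ w ≤ v θ z :=
  unique_extreme_off_Theta_general n hn p q hq r hr0 hr1 c hc Λ hne hcomp hinv θ hθ
end
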